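/- Let v be a henselian valuation on a field K with residue field Kv of characteristic different from 2, and suppose Kv is real (so s(Kv) = ∞). Then p(K) = p(Kv). -/

import Mathlib

/-- `a` is a sum of `n` squares in `R`. -/
def IsSumSqN {R : Type*} [CommRing R] (n : ℕ) (a : R) : Prop :=
  ∃ x : Fin n → R, a = ∑ i, x i ^ 2

/-- `a` is a sum of squares in `R`. -/
def IsSOS {R : Type*} [CommRing R] (a : R) : Prop := ∃ n, IsSumSqN n a

/-- The level `s(R)`. -/
noncomputable def levelN (R : Type*) [CommRing R] : ℕ∞ :=
  sInf {n : ℕ∞ | ∃ m : ℕ, (m : ℕ∞) = n ∧ IsSumSqN m (-1 : R)}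

/-- The Pythagoras number `p(R)`. -/
noncomputable def pythNum (R : Type*) [CommRing R] : ℕ∞ :=
  sInf {n : ℕ∞ | ∃ m : ℕ, (m : ℕ∞) = n ∧ ∀ a : R, IsSOS a → IsSumSqN m a}

open Classical in
/-- The modified Pythagoras number `p'(R)`. -/
noncomputable def pythNum' (R : Type*) [CommRing R] : ℕ∞ :=
  if ¬ IsSOS (-1 : R) ∨ ringChar R = 2 then pythNum R else levelN R + 1

/-!
Write a nonzero sum of squares in `K` as `∑ xᵢ² = x_j² · b` with `b = ∑ (xᵢ / x_j)²`, where
`x_j` has the largest value. Since `Kv` is real, the residue of `b` is a nonzero sum of squares,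
so `b` is a unit of the valuation ring. Hence a sum of squares of `K` lying in the valuation ring
is a sum of squares of integral elements, which gives `p(Kv) ≤ p(K)`. Conversely, if the residue
of `b` is a sum `∑ z̄ₗ²` of `m` squares, then `b / ∑ zₗ²` is a unit with residue `1`, hence a
square by Hensel's lemma as `char Kv ≠ 2`, so `b` and then `∑ xᵢ²` are sums of `m` squares.
-/

open IsLocalRing Polynomial

/-- `IsPythBound R m` says `p(R) ≤ m`. -/
def IsPythBound (R : Type*) [CommRing R] (m : ℕ) : Prop :=
  ∀ a : R, IsSOS a → IsSumSqN m a

lemma pythNum_congr {R S : Type*} [CommRing R] [CommRing S]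
    (h : ∀ m, IsPythBound R m ↔ IsPythBound S m) : pythNum R = pythNum S := by
  simp only [pythNum]
  exact congrArg sInf (Set.ext fun _ => exists_congr fun m => and_congr_right fun _ => h m)

section SumsOfSquares

variable {R S : Type*} [CommRing R] [CommRing S] {n : ℕ} {a : R}

lemma isSumSqN_zero : IsSumSqN n (0 : R) :=
  ⟨0, by simp⟩

lemma IsSumSqN.map (f : R →+* S) (h : IsSumSqN n a) : IsSumSqN n (f a) := by
  obtain ⟨x, rfl⟩ := h
  exact ⟨fun i => f (x i), by simp⟩

lemma IsSumSqN.sq_mul (c : R) (h : IsSumSqN n a) : IsSumSqN n (c ^ 2 * a) := by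
  obtain ⟨x, rfl⟩ := h
  exact ⟨fun i => c * x i, by simp [Finset.mul_sum, mul_pow]⟩

lemma IsSumSqN.exists_preimage {f : R →+* S} (hf : Function.Surjective f) {b : S}
    (h : IsSumSqN n b) : ∃ a, IsSumSqN n a ∧ f a = b := by
  obtain ⟨y, rfl⟩ := h
  choose x hx using fun i => hf (y i)
  exact ⟨∑ i, x i ^ 2, ⟨x, rfl⟩, by simp [hx]⟩

lemma sum_sq_ne_zero_of_ne_zero {F : Type*} [Field F] (hF : ¬ IsSOS (-1 : F)) (y : Fin n → F)
    {j : Fin n} (hj : y j ≠ 0) : ∑ i, y i ^ 2 ≠ 0 := by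
  obtain ⟨n, rfl⟩ : ∃ k, n = k + 1 := ⟨n - 1, (Nat.succ_pred_eq_of_pos j.pos).symm⟩
  intro h
  refine hF ⟨n, fun k => y (j.succAbove k) / y j, ?_⟩
  rw [Fin.sum_univ_succAbove _ j] at h
  have hsum : ∑ k, y (j.succAbove k) ^ 2 = -y j ^ 2 := by linear_combination h
  simp only [div_pow, ← Finset.sum_div, hsum, neg_div, div_self (pow_ne_zero 2 hj)]

lemma IsLocalRing.isUnit_sum_sq [IsLocalRing R] (hreal : ¬ IsSOS (-1 : ResidueField R))
    (x : Fin n → R) {j : Fin n} (hj : IsUnit (x j)) : IsUnit (∑ i, x i ^ 2) := by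
  rw [← residue_ne_zero_iff_isUnit, map_sum]
  simp only [map_pow]
  exact sum_sq_ne_zero_of_ne_zero hreal _ ((residue_ne_zero_iff_isUnit _).mpr hj)

end SumsOfSquares

section HenselianLocalRing

variable {R : Type*} [CommRing R] [HenselianLocalRing R] (h2 : (2 : ResidueField R) ≠ 0)
include h2

lemma HenselianLocalRing.exists_sq_eq_of_residue_eq_one {u : R} (hu : residue R u = 1) :
    ∃ w : R, w ^ 2 = u := by
  have hroot : (X ^ 2 - C u).eval 1 ∈ maximalIdeal R := by
    rw [← residue_eq_zero_iff]; simp [hu]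
  have hderiv : IsUnit ((X ^ 2 - C u).derivative.eval 1) := by
    have : (X ^ 2 - C u).derivative.eval 1 = 2 := by
      simp [one_add_one_eq_two]
    rwa [this, ← residue_ne_zero_iff_isUnit, map_ofNat]
  obtain ⟨w, hw, -⟩ := HenselianLocalRing.is_henselian (X ^ 2 - C u)
    (monic_X_pow_sub_C u two_ne_zero) 1 hroot hderiv
  exact ⟨w, by simpa [sub_eq_zero] using hw⟩

lemma HenselianLocalRing.isSumSqN_of_isSumSqN_residue {n : ℕ} {b : R} (hb : IsUnit b)
    (h : IsSumSqN n (residue R b)) : IsSumSqN n b := by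
  obtain ⟨c, hc, hcb⟩ := h.exists_preimage residue_surjective
  have hcu : IsUnit c := by rwa [← residue_ne_zero_iff_isUnit, hcb, residue_ne_zero_iff_isUnit]
  obtain ⟨w, hw⟩ := exists_sq_eq_of_residue_eq_one h2 (u := b * hcu.unit⁻¹) <| by
    rw [map_mul, ← hcb, ← map_mul, IsUnit.mul_val_inv, map_one]
  have hbw : b = w ^ 2 * c := by rw [hw, mul_assoc, IsUnit.val_inv_mul, mul_one]
  exact hbw ▸ hc.sq_mul w

end HenselianLocalRing

namespace Valuation

variable {K : Type*} [Field K] {Γ₀ : Type*} [LinearOrderedCommGroupWithZero Γ₀]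
  (v : Valuation K Γ₀) {n : ℕ}

lemma exists_forall_div_mem_valuationSubring (x : Fin n → K) (hx : ∃ i, x i ≠ 0) :
    ∃ j, x j ≠ 0 ∧ ∀ i, x i / x j ∈ v.valuationSubring := by
  obtain ⟨i₀, hi₀⟩ := hx
  obtain ⟨j, -, hj⟩ :=
    Finset.exists_max_image Finset.univ (fun i => v (x i)) ⟨i₀, Finset.mem_univ _⟩
  have hxj : x j ≠ 0 := fun h0 =>
    hi₀ (v.zero_iff.mp (le_zero_iff.mp (by simpa [h0] using hj i₀ (Finset.mem_univ _))))
  refine ⟨j, hxj, fun i => ?_⟩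
  rw [mem_valuationSubring_iff, map_div₀]
  exact div_le_one_of_le₀ (hj i (Finset.mem_univ _)) zero_le

lemma sum_sq_eq_sq_mul (x : Fin n → K) (j : Fin n) (B : Fin n → v.valuationSubring)
    (hB : ∀ i, x i = x j * B i) :
    ∑ i, x i ^ 2 = x j ^ 2 * ((∑ i, B i ^ 2 : v.valuationSubring) : K) := by
  push_cast
  rw [Finset.mul_sum]
  exact Finset.sum_congr rfl fun i _ => by rw [hB i, mul_pow]

variable (hreal : ¬ IsSOS (-1 : ResidueField v.valuationSubring))
include hreal

lemma exists_eq_mul_and_isUnit_sum_sq (x : Fin n → K) (hx : ∃ i, x i ≠ 0) :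
    ∃ j, ∃ B : Fin n → v.valuationSubring,
      (∀ i, x i = x j * B i) ∧ IsUnit (∑ i, B i ^ 2) := by
  obtain ⟨j, hxj, hdiv⟩ := v.exists_forall_div_mem_valuationSubring x hx
  set B : Fin n → v.valuationSubring := fun i => ⟨x i / x j, hdiv i⟩
  have hBj : B j = 1 := Subtype.ext (div_self hxj)
  refine ⟨j, B, fun i => (mul_div_cancel₀ _ hxj).symm, ?_⟩
  exact isUnit_sum_sq hreal B (hBj ▸ isUnit_one)

lemma mem_valuationSubring_of_sum_sq_mem (x : Fin n → K)
    (hmem : ∑ i, x i ^ 2 ∈ v.valuationSubring) (i : Fin n) : x i ∈ v.valuationSubring := by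
  by_cases hx : ∃ i, x i ≠ 0
  swap
  · push Not at hx
    simp [hx]
  obtain ⟨j, B, hB, hunit⟩ := v.exists_eq_mul_and_isUnit_sum_sq hreal x hx
  set c : v.valuationSubring := ↑hunit.unit⁻¹
  have hinv : ((∑ i, B i ^ 2 : v.valuationSubring) : K) * c = 1 := by
    exact_mod_cast congrArg Subtype.val hunit.mul_val_inv
  have hsq : x j ^ 2 = (∑ i, x i ^ 2) * c := by
    rw [v.sum_sq_eq_sq_mul x j B hB, mul_assoc, hinv, mul_one]
  have hxj : x j ∈ v.valuationSubring := by
    have := mul_mem hmem c.2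
    rwa [← hsq, mem_valuationSubring_iff, map_pow, pow_le_one_iff two_ne_zero] at this
  rw [hB i]
  exact mul_mem hxj (B i).2

variable {m : ℕ}

lemma isPythBound_residueField_of_isPythBound (hK : IsPythBound K m) :
    IsPythBound (ResidueField v.valuationSubring) m := by
  rintro _ ⟨N, hN⟩
  obtain ⟨a, ha, rfl⟩ := hN.exists_preimage residue_surjective
  obtain ⟨x, hx⟩ := hK a ⟨N, ha.map v.valuationSubring.subtype⟩
  have hxO := v.mem_valuationSubring_of_sum_sq_mem hreal x (hx ▸ a.2)
  refine IsSumSqN.map (residue _) ⟨fun l => ⟨x l, hxO l⟩, Subtype.ext ?_⟩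
  simpa using hx

lemma isPythBound_of_isPythBound_residueField [HenselianLocalRing v.valuationSubring]
    (h2 : (2 : ResidueField v.valuationSubring) ≠ 0)
    (hk : IsPythBound (ResidueField v.valuationSubring) m) : IsPythBound K m := by
  rintro _ ⟨N, x, rfl⟩
  by_cases hx : ∃ i, x i ≠ 0
  swap
  · push Not at hx
    simpa [hx] using isSumSqN_zero (R := K) (n := m)
  obtain ⟨j, B, hB, hunit⟩ := v.exists_eq_mul_and_isUnit_sum_sq hreal x hx
  have hres : IsSumSqN m (residue _ (∑ i, B i ^ 2)) :=
    hk _ ⟨N, IsSumSqN.map (residue _) ⟨B, rfl⟩⟩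
  rw [v.sum_sq_eq_sq_mul x j B hB]
  exact ((HenselianLocalRing.isSumSqN_of_isSumSqN_residue h2 hunit hres).map
    v.valuationSubring.subtype).sq_mul _

end Valuation

/-- For a henselian valuation with real residue field of characteristic not 2,
`p(K) = p(Kv)`. -/
theorem pyth_eq_pyth_residue_of_henselian_real {K : Type*} [Field K] {Γ₀ : Type*}
    [LinearOrderedCommGroupWithZero Γ₀] (v : Valuation K Γ₀)
    [HenselianLocalRing v.valuationSubring]
    (h2 : ringChar (IsLocalRing.ResidueField v.valuationSubring) ≠ 2)
    (hreal : ¬ IsSOS (-1 : IsLocalRing.ResidueField v.valuationSubring)) :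
    pythNum K = pythNum (IsLocalRing.ResidueField v.valuationSubring) :=
  pythNum_congr fun _ => ⟨v.isPythBound_residueField_of_isPythBound hreal,
    v.isPythBound_of_isPythBound_residueField hreal (Ring.two_ne_zero h2)⟩
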